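/- Multidimensional injectivity of the discrete signature: if x and y are time-warping reduced time-series in ℝ^d with all discrete signature coefficients equal, then they have the same length n and their difference time-series are equal, i.e., x_{j+1} − x_j = y_{j+1} − y_j for all j; hence x and y differ by a constant translation. -/

import Mathlib

/-!
Write `u_k = x_{k+1} - x_k`. A word longer than the series has no increasing index sequence, so its
coefficient vanishes, while a word of length exactly `n` sees only the identity index sequence and
gives `∏ₖ pₖ(u_k)`. Choosing for every `k` a coordinate where `u_k` does not vanish yields a word of
length `n` with nonzero coefficient for `x`, which forces the lengths to agree. With equal lengths,
compare a word `p` having nonzero coefficient with `p + Z_i` placed at position `j`: the quotient of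
the two coefficients is the `i`-th coordinate of the `j`-th increment, for `x` and for `y` alike.
-/

open Finset

/-- Evaluation of the monomial with exponent vector `a` at `v ∈ ℝ^d`. -/
noncomputable def mon {d : ℕ} (a : Fin d → ℕ) (v : Fin d → ℝ) : ℝ := ∏ i, v i ^ a i

/-- Discrete signature coefficient of the time-series `x = (x₀, …, x_n)` in `ℝ^d`
associated to the word of monomials `p₁ ⊗ ⋯ ⊗ p_ℓ`:
`Σ_{1 ≤ i₁ < ⋯ < i_ℓ ≤ n} ∏_k p_k(x_{i_k+1} − x_{i_k})`. -/
noncomputable def dsig {d n ℓ : ℕ} (x : Fin (n + 1) → Fin d → ℝ)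
    (p : Fin ℓ → Fin d → ℕ) : ℝ :=
  ∑ i ∈ Finset.univ.filter (fun i : Fin ℓ → Fin n => ∀ a b : Fin ℓ, a < b → i a < i b),
    ∏ k, mon (p k) (x (i k).succ - x (i k).castSucc)

section Monomial

variable {d : ℕ}

lemma mon_zero (v : Fin d → ℝ) : mon 0 v = 1 := by
  simp [mon]

lemma mon_add (a b : Fin d → ℕ) (v : Fin d → ℝ) : mon (a + b) v = mon a v * mon b v := by
  simp only [mon, Pi.add_apply, pow_add, prod_mul_distrib]

lemma mon_single (i : Fin d) (e : ℕ) (v : Fin d → ℝ) : mon (Pi.single i e) v = v i ^ e := by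
  rw [mon, Fintype.prod_eq_single i fun k hk => by rw [Pi.single_eq_of_ne hk, pow_zero],
    Pi.single_eq_same]

variable {ι : Type*} [Fintype ι]

lemma exists_word_prod_mon_ne_zero {u : ι → Fin d → ℝ} (hu : ∀ k, u k ≠ 0) :
    ∃ p : ι → Fin d → ℕ, (∀ k, p k ≠ 0) ∧ ∏ k, mon (p k) (u k) ≠ 0 := by
  choose c hc using fun k => Function.ne_iff.mp (hu k)
  refine ⟨fun k => Pi.single (c k) 1, fun k => by simp, prod_ne_zero_iff.mpr fun k _ => ?_⟩
  simpa [mon_single] using hc k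

lemma eq_of_prod_mon_eq [DecidableEq ι] {u w : ι → Fin d → ℝ} (hu : ∀ k, u k ≠ 0)
    (h : ∀ p : ι → Fin d → ℕ, (∀ k, p k ≠ 0) → ∏ k, mon (p k) (u k) = ∏ k, mon (p k) (w k)) :
    u = w := by
  obtain ⟨p, hp, hpu⟩ := exists_word_prod_mon_ne_zero hu
  funext j i
  let q : ι → Fin d → ℕ := Pi.single j (Pi.single i 1)
  have hshift : ∀ v : ι → Fin d → ℝ,
      ∏ k, mon (p k + q k) (v k) = (∏ k, mon (p k) (v k)) * v j i := by
    intro v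
    simp only [mon_add, prod_mul_distrib]
    congr 1
    rw [Fintype.prod_eq_single j fun k hk => by simp [q, Pi.single_eq_of_ne hk, mon_zero]]
    simp [q, mon_single]
  have hpj := h (fun k => p k + q k) fun k => by simp [hp k]
  rw [hshift, hshift, ← h p hp] at hpj
  exact mul_left_cancel₀ hpu hpj

end Monomial

section Signature

variable {d n m ℓ : ℕ}

lemma dsig_eq_zero_of_lt (hlt : n < ℓ) (x : Fin (n + 1) → Fin d → ℝ) (p : Fin ℓ → Fin d → ℕ) :
    dsig x p = 0 := by
  refine sum_eq_zero fun i hi => absurd ?_ hlt.not_ge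
  have hmono : StrictMono i := fun a b => (mem_filter.mp hi).2 a b
  simpa using Fintype.card_le_of_injective i hmono.injective

lemma dsig_eq_prod_mon (x : Fin (n + 1) → Fin d → ℝ) (p : Fin n → Fin d → ℕ) :
    dsig x p = ∏ k, mon (p k) (x k.succ - x k.castSucc) := by
  have hid : univ.filter (fun i : Fin n → Fin n => ∀ a b, a < b → i a < i b) = {id} := by
    ext i
    simpa using ⟨fun hi => StrictMono.eq_id fun a b => hi a b, fun hi a b hab => hi ▸ hab⟩
  rw [dsig, hid, sum_singleton]
  rfl

lemma le_of_dsig_eq {x : Fin (n + 1) → Fin d → ℝ} {y : Fin (m + 1) → Fin d → ℝ}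
    (hx : ∀ j : Fin n, x j.succ ≠ x j.castSucc)
    (h : ∀ p : Fin n → Fin d → ℕ, (∀ k, p k ≠ 0) → dsig x p = dsig y p) : n ≤ m := by
  obtain ⟨p, hp, hne⟩ := exists_word_prod_mon_ne_zero fun k => sub_ne_zero.mpr (hx k)
  by_contra! hlt
  exact hne (by rw [← dsig_eq_prod_mon, h p hp, dsig_eq_zero_of_lt hlt])

end Signature

/-- multidimensional injectivity of the discrete signature on
time-warping reduced time-series: equal signatures force equal lengths and equal
difference time-series (so the series differ by a constant translation). -/
theorem dsig_injective_twr (d n m : ℕ)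
    (x : Fin (n + 1) → Fin d → ℝ) (y : Fin (m + 1) → Fin d → ℝ)
    (hx : ∀ j : Fin n, x j.succ ≠ x j.castSucc)
    (hy : ∀ j : Fin m, y j.succ ≠ y j.castSucc)
    (hsig : ∀ (ℓ : ℕ) (p : Fin ℓ → Fin d → ℕ), (∀ k, p k ≠ 0) → dsig x p = dsig y p) :
    ∃ h : n = m, ∀ j : Fin n,
      x j.succ - x j.castSucc =
        y (Fin.cast (congrArg Nat.succ h) j.succ) -
          y (Fin.cast (congrArg Nat.succ h) j.castSucc) := by
  obtain rfl : n = m := le_antisymm (le_of_dsig_eq hx (hsig n))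
    (le_of_dsig_eq hy fun p hp => (hsig m p hp).symm)
  have hincr := eq_of_prod_mon_eq (fun k => sub_ne_zero.mpr (hx k)) fun p hp => by
    simpa only [dsig_eq_prod_mon] using hsig n p hp
  exact ⟨rfl, fun j => congrFun hincr j⟩
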